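/- Let p be a nonzero prime ideal of O_K with absolute norm N(p) = q. For all integers 0 ≤ i ≤ ℓ, the minimum Euclidean distances of the lattices L_ℓ = τ(p^ℓ) and L_i = τ(p^i) satisfy d_E(L_ℓ)² / d_E(L_i)² ≤ q^{2(ℓ-i)/m} · |D_K|^{1/m}, where D_K is the discriminant of K and m = [K:ℚ]. -/

import Mathlib

open scoped BigOperators
open MeasureTheory

noncomputable section

/-- The index set for `ℝ^{s+2t}`: `s` real coordinates and `t` pairs of coordinates. -/
abbrev PackIdx (s t : ℕ) := Fin s ⊕ Fin t × Fin 2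

/-- The canonical embedding `τ : K → ℝ^{s+2t}`,
`τ(α) = (ρ₁(α),…,ρ_s(α), √2·Re σ₁(α), √2·Im σ₁(α), …, √2·Re σ_t(α), √2·Im σ_t(α))`. -/
def tauEmb {K : Type*} [Field K] {s t : ℕ}
    (ρ : Fin s → (K →+* ℝ)) (σ : Fin t → (K →+* ℂ)) (α : K) :
    EuclideanSpace ℝ (PackIdx s t) :=
  (EuclideanSpace.equiv (PackIdx s t) ℝ).symm <|
    Sum.elim (fun i => ρ i α)
      (fun p => if p.2 = (0 : Fin 2) then Real.sqrt 2 * (σ p.1 α).re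
                else Real.sqrt 2 * (σ p.1 α).im)

/-- The system of `s + 2t` field embeddings `K → ℂ` determined by the data `ρ, σ`:
the real embeddings `ρᵢ` and the complex embeddings `σⱼ` together with their conjugates. -/
def embSystem {K : Type*} [Field K] {s t : ℕ}
    (ρ : Fin s → (K →+* ℝ)) (σ : Fin t → (K →+* ℂ)) : PackIdx s t → (K →+* ℂ) :=
  Sum.elim (fun i => Complex.ofRealHom.comp (ρ i))
    (fun p => if p.2 = (0 : Fin 2) then σ p.1 else (starRingEnd ℂ).comp (σ p.1))

/-- `ρ, σ` list exactly the real embeddings and the pairs of complex-conjugate embeddings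
of `K`, without repetition: the associated system of `s+2t` embeddings `K → ℂ` is a
bijective enumeration of all field embeddings `K → ℂ`. -/
def IsEmbSystem {K : Type*} [Field K] {s t : ℕ}
    (ρ : Fin s → (K →+* ℝ)) (σ : Fin t → (K →+* ℂ)) : Prop :=
  Function.Bijective (embSystem ρ σ)

/-- The minimum (infimal) Euclidean distance between two distinct points of `P`. -/
def minDist {E : Type*} [MetricSpace E] (P : Set E) : ℝ :=
  sInf {d : ℝ | ∃ x ∈ P, ∃ y ∈ P, x ≠ y ∧ dist x y = d}

/-- The volume `V_N` of the unit ball in `ℝ^N` (with index set `ι`, `N = |ι|`). -/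
def unitBallVol (ι : Type*) [Fintype ι] : ℝ :=
  (volume (Metric.ball (0 : EuclideanSpace ℝ ι) 1)).toReal

/-- The packing density
`Δ(P) = limsup_{R→∞} |P ∩ B(R)| · r^N · V_N / vol(B(R+r))`, where `r = d_E(P)/2`. -/
def packDensity {ι : Type*} [Fintype ι] (P : Set (EuclideanSpace ℝ ι)) : ℝ :=
  Filter.limsup (fun R : ℝ =>
    (Nat.card (P ∩ Metric.closedBall 0 R : Set (EuclideanSpace ℝ ι)) : ℝ) *
      (minDist P / 2) ^ (Fintype.card ι) * unitBallVol ι /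
      (volume (Metric.closedBall (0 : EuclideanSpace ℝ ι) (R + minDist P / 2))).toReal)
    Filter.atTop

/-- `L_I = τ(I)`, the image in `ℝ^{s+2t}` of an ideal `I` of the ring of integers under the
canonical embedding. -/
def idealImage {K : Type*} [Field K] [NumberField K] {s t : ℕ}
    (ρ : Fin s → (K →+* ℝ)) (σ : Fin t → (K →+* ℂ))
    (I : Ideal (NumberField.RingOfIntegers K)) : Set (EuclideanSpace ℝ (PackIdx s t)) :=
  (fun a : NumberField.RingOfIntegers K =>
    tauEmb ρ σ (algebraMap (NumberField.RingOfIntegers K) K a)) '' (I : Set _)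

/-- The coordinatewise extension `τ : K^n → ℝ^{mn}`. -/
def tauEmbN {K : Type*} [Field K] {s t : ℕ} {n : ℕ}
    (ρ : Fin s → (K →+* ℝ)) (σ : Fin t → (K →+* ℂ)) (c : Fin n → K) :
    EuclideanSpace ℝ (Fin n × PackIdx s t) :=
  (EuclideanSpace.equiv (Fin n × PackIdx s t) ℝ).symm fun p => tauEmb ρ σ (c p.1) p.2

/-- The Cartesian product `L^n ⊆ ℝ^{mn}` of `n` copies of `L ⊆ ℝ^m`. -/
def prodSet {ι : Type*} (n : ℕ) (L : Set (EuclideanSpace ℝ ι)) :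
    Set (EuclideanSpace ℝ (Fin n × ι)) :=
  {x | ∀ j : Fin n,
    ((EuclideanSpace.equiv ι ℝ).symm fun i => (EuclideanSpace.equiv (Fin n × ι) ℝ) x (j, i)) ∈ L}

/-- `S` is a valid alphabet set at level `i`: a set of `q` elements of `p^i` containing `0`
whose residues modulo `p^{i+1}` represent the `q` distinct elements of `p^i/p^{i+1}`. -/
def IsRepSet {K : Type*} [Field K] [NumberField K]
    (p : Ideal (NumberField.RingOfIntegers K)) (i q : ℕ)
    (S : Set (NumberField.RingOfIntegers K)) : Prop :=
  S ⊆ (p ^ i : Ideal (NumberField.RingOfIntegers K)) ∧ (0 : NumberField.RingOfIntegers K) ∈ S ∧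
    Nat.card S = q ∧
    (∀ x ∈ S, ∀ y ∈ S, x ≠ y → x - y ∉ (p ^ (i + 1) : Ideal (NumberField.RingOfIntegers K))) ∧
    (∀ z ∈ (p ^ i : Ideal (NumberField.RingOfIntegers K)), ∃ a ∈ S,
      z - a ∈ (p ^ (i + 1) : Ideal (NumberField.RingOfIntegers K)))

/-- Hamming distance between two words. -/
def hDist {n : ℕ} {A : Type*} (u v : Fin n → A) : ℕ := Nat.card {j : Fin n // u j ≠ v j}

/-- The minimum Hamming distance of a code `C`. -/
def codeMinDist {n : ℕ} {A : Type*} (C : Set (Fin n → A)) : ℕ :=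
  sInf {d : ℕ | ∃ u ∈ C, ∃ v ∈ C, u ≠ v ∧ hDist u v = d}

/-- `C` is an `(n, M, d)`-code over the alphabet set `S`. -/
def IsCode {A : Type*} {n : ℕ} (S : Set A) (M d : ℕ) (C : Set (Fin n → A)) : Prop :=
  (∀ c ∈ C, ∀ j, c j ∈ S) ∧ Nat.card C = M ∧ codeMinDist C = d

/-- The translate `τ(c) + P` of `P` by the embedded codeword `c`. -/
def wordTranslate {K : Type*} [Field K] [NumberField K] {s t n : ℕ}
    (ρ : Fin s → (K →+* ℝ)) (σ : Fin t → (K →+* ℂ))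
    (c : Fin n → NumberField.RingOfIntegers K)
    (P : Set (EuclideanSpace ℝ (Fin n × PackIdx s t))) :
    Set (EuclideanSpace ℝ (Fin n × PackIdx s t)) :=
  {z | ∃ x ∈ P, z = tauEmbN ρ σ (fun j => algebraMap (NumberField.RingOfIntegers K) K (c j)) + x}

/-- The concatenation `τ(C) + P = { τ(c) + p : c ∈ C, p ∈ P }`. -/
def codeTranslate {K : Type*} [Field K] [NumberField K] {s t n : ℕ}
    (ρ : Fin s → (K →+* ℝ)) (σ : Fin t → (K →+* ℂ))
    (C : Set (Fin n → NumberField.RingOfIntegers K))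
    (P : Set (EuclideanSpace ℝ (Fin n × PackIdx s t))) :
    Set (EuclideanSpace ℝ (Fin n × PackIdx s t)) :=
  {z | ∃ c ∈ C, ∃ x ∈ P,
    z = tauEmbN ρ σ (fun j => algebraMap (NumberField.RingOfIntegers K) K (c j)) + x}

/-- The concatenation `τ(𝒞) + P = { Σ_{i<ℓ} τ(cᵢ) + p : cᵢ ∈ Cᵢ, p ∈ P }` of a family of codes. -/
def famTranslate {K : Type*} [Field K] [NumberField K] {s t n ℓ : ℕ}
    (ρ : Fin s → (K →+* ℝ)) (σ : Fin t → (K →+* ℂ))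
    (C : Fin ℓ → Set (Fin n → NumberField.RingOfIntegers K))
    (P : Set (EuclideanSpace ℝ (Fin n × PackIdx s t))) :
    Set (EuclideanSpace ℝ (Fin n × PackIdx s t)) :=
  {z | ∃ c : Fin ℓ → (Fin n → NumberField.RingOfIntegers K), (∀ i, c i ∈ C i) ∧ ∃ x ∈ P,
    z = (∑ i : Fin ℓ,
      tauEmbN ρ σ (fun j => algebraMap (NumberField.RingOfIntegers K) K (c i j))) + x}

/-! Minkowski's convex body theorem, applied to the ideal `p^(ℓ-i)`, gives a nonzero
`α ∈ p^(ℓ-i)` all of whose conjugates have absolute value below any `c` with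
`c^m > N(p^(ℓ-i)) · √|D_K|`. Multiplication by `α` maps `p^i` injectively into `p^ℓ`, and since
`‖τ x‖² = ∑_φ |φ x|²` it scales distances by at most `c`; hence `d_E(L_ℓ) ≤ c · d_E(L_i)`.
Letting `c` decrease to `(q^(ℓ-i) · √|D_K|)^(1/m)` and squaring gives the bound. -/

section MinDist

variable {E F : Type*} [MetricSpace E] [MetricSpace F]

theorem minDist_nonneg (P : Set E) : 0 ≤ minDist P :=
  Real.sInf_nonneg <| by rintro _ ⟨x, -, y, -, -, rfl⟩; exact dist_nonneg

theorem minDist_le_dist {P : Set E} {x y : E} (hx : x ∈ P) (hy : y ∈ P) (hxy : x ≠ y) :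
    minDist P ≤ dist x y :=
  csInf_le ⟨0, by rintro _ ⟨x, -, y, -, -, rfl⟩; exact dist_nonneg⟩ ⟨x, hx, y, hy, hxy, rfl⟩

theorem minDist_le_mul_minDist_image {A : Type*} {S : Set A} {u : A → E} {v : A → F} {Q : Set F}
    {c : ℝ} (hc : 0 ≤ c) (hS : (u '' S).Nontrivial) (hvQ : Set.MapsTo v S Q)
    (hv : Set.InjOn v S) (hlip : ∀ a ∈ S, ∀ b ∈ S, dist (v a) (v b) ≤ c * dist (u a) (u b)) :
    minDist Q ≤ c * minDist (u '' S) := by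
  obtain ⟨x, hx, y, hy, hxy⟩ := hS
  unfold minDist
  rw [← smul_eq_mul, ← Real.sInf_smul_of_nonneg hc]
  refine le_csInf ⟨_, _, ⟨x, hx, y, hy, hxy, rfl⟩, rfl⟩ ?_
  rintro _ ⟨_, ⟨_, ⟨a, ha, rfl⟩, _, ⟨b, hb, rfl⟩, hab, rfl⟩, rfl⟩
  have hab' : a ≠ b := by rintro rfl; exact hab rfl
  exact (minDist_le_dist (hvQ ha) (hvQ hb) (hv.ne ha hb hab')).trans (hlip a ha b hb)

end MinDist

section CanonicalEmbedding

variable {K : Type*} [Field K] {s t : ℕ} (ρ : Fin s → (K →+* ℝ)) (σ : Fin t → (K →+* ℂ))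

theorem tauEmb_sub (u v : K) : tauEmb ρ σ (u - v) = tauEmb ρ σ u - tauEmb ρ σ v := by
  ext (i | ⟨j, k⟩)
  · simp [tauEmb]
  · fin_cases k <;> simp [tauEmb, mul_sub]

theorem norm_tauEmb_sq (z : K) :
    ‖tauEmb ρ σ z‖ ^ 2 = ∑ k, ‖embSystem ρ σ k z‖ ^ 2 := by
  simp only [EuclideanSpace.norm_sq_eq, Fintype.sum_sum_type, Fintype.sum_prod_type,
    Fin.sum_univ_two]
  congr 1
  · simp [tauEmb, embSystem]
  · refine Finset.sum_congr rfl fun j _ => ?_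
    simp only [tauEmb, Fin.isValue, PiLp.continuousLinearEquiv_symm_apply, Sum.elim_inr,
      ↓reduceIte, norm_mul, Real.norm_eq_abs, mul_pow, sq_abs, Nat.ofNat_nonneg, Real.sq_sqrt,
      one_ne_zero, embSystem, Complex.sq_norm, Complex.normSq_apply, RingHom.coe_comp,
      Function.comp_apply, RCLike.norm_conj]
    ring

theorem norm_tauEmb_mul_le {a : K} {c : ℝ} (hc : 0 ≤ c) (ha : ∀ k, ‖embSystem ρ σ k a‖ ≤ c)
    (z : K) : ‖tauEmb ρ σ (a * z)‖ ≤ c * ‖tauEmb ρ σ z‖ := by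
  refine le_of_sq_le_sq ?_ (by positivity)
  rw [mul_pow, norm_tauEmb_sq, norm_tauEmb_sq, Finset.mul_sum]
  gcongr with k
  rw [map_mul, norm_mul, mul_pow]
  gcongr
  exact ha k

theorem tauEmb_injective [Nonempty (PackIdx s t)] : Function.Injective (tauEmb ρ σ) := by
  intro u v huv
  have hzero : ∑ k, ‖embSystem ρ σ k (u - v)‖ ^ 2 = 0 := by
    rw [← norm_tauEmb_sq, tauEmb_sub, huv, sub_self, norm_zero, sq, zero_mul]
  obtain ⟨k⟩ := ‹Nonempty (PackIdx s t)›
  have hk := (Finset.sum_eq_zero_iff_of_nonneg fun _ _ => by positivity).mp hzero k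
    (Finset.mem_univ k)
  exact (embSystem ρ σ k).injective (by simpa [sub_eq_zero] using hk)

end CanonicalEmbedding

open NumberField InfinitePlace mixedEmbedding
open scoped nonZeroDivisors

section Minkowski

variable {K : Type*} [Field K] [NumberField K]

theorem IsEmbSystem.add_two_mul_eq_finrank {s t : ℕ} {ρ : Fin s → (K →+* ℝ)}
    {σ : Fin t → (K →+* ℂ)} (h : IsEmbSystem ρ σ) : s + 2 * t = Module.finrank ℚ K := by
  rw [← Embeddings.card K ℂ, ← Fintype.card_of_bijective h]
  simp [mul_comm]

theorem minkowskiBound_eq (I : (FractionalIdeal (𝓞 K)⁰ K)ˣ) :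
    minkowskiBound K I = ENNReal.ofReal (2 ^ nrRealPlaces K * 2 ^ nrComplexPlaces K *
      (FractionalIdeal.absNorm I.1 * √|discr K|)) := by
  classical
  rw [minkowskiBound, volume_fundamentalDomain_fractionalIdealLatticeBasis,
    volume_fundamentalDomain_latticeBasis, mixedEmbedding.finrank,
    ← card_add_two_mul_card_eq_rank]
  have hN : (0 : ℝ) ≤ FractionalIdeal.absNorm I.1 := by
    exact_mod_cast FractionalIdeal.absNorm_nonneg _
  rw [← ENNReal.toReal_eq_toReal_iff' (by finiteness) ENNReal.ofReal_ne_top,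
    ENNReal.toReal_ofReal (by positivity)]
  simp only [two_mul, pow_add, ENNReal.toReal_mul, ENNReal.toReal_ofReal hN, ENNReal.toReal_pow,
    ENNReal.toReal_inv, ENNReal.toReal_ofNat, inv_pow, ENNReal.coe_toReal, Real.coe_sqrt,
    coe_nnnorm, Int.norm_eq_abs]
  field_simp

theorem exists_ne_zero_mem_ideal_forall_norm_lt {J : Ideal (𝓞 K)} (hJ : J ≠ ⊥) {c : ℝ}
    (hc₀ : 0 ≤ c) (hc : Ideal.absNorm J * √|discr K| < c ^ Module.finrank ℚ K) :
    ∃ α ∈ J, α ≠ 0 ∧ ∀ φ : K →+* ℂ, ‖φ α‖ < c := by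
  classical
  have hJ' : (J : FractionalIdeal (𝓞 K)⁰ K) ≠ 0 := by
    rwa [ne_eq, FractionalIdeal.coeIdeal_eq_zero]
  have hvol : minkowskiBound K (Units.mk0 _ hJ') <
      volume (convexBodyLT K fun _ => c.toNNReal) := by
    rw [convexBodyLT_volume, Finset.prod_pow_eq_pow_sum, sum_mult_eq, minkowskiBound_eq,
      Units.val_mk0, FractionalIdeal.coeIdeal_absNorm, ← ENNReal.coe_mul, ← ENNReal.ofReal_coe_nnreal,
      ENNReal.ofReal_lt_ofReal_iff_of_nonneg (by positivity)]
    simp only [Rat.cast_natCast, convexBodyLTFactor, NNReal.coe_mul, NNReal.coe_pow,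
      NNReal.coe_ofNat, NNReal.coe_real_pi, Real.coe_toNNReal', hc₀, sup_of_le_left]
    calc _ < 2 ^ nrRealPlaces K * 2 ^ nrComplexPlaces K * c ^ Module.finrank ℚ K := by gcongr
      _ ≤ _ := by gcongr; exact Real.two_le_pi
  obtain ⟨a, haJ, ha0, hlt⟩ := exists_ne_zero_mem_ideal_lt K (Units.mk0 _ hJ') hvol
  obtain ⟨α, hαJ, rfl⟩ := (FractionalIdeal.mem_coeIdeal _).mp haJ
  refine ⟨α, hαJ, by rintro rfl; exact ha0 (map_zero _), fun φ => ?_⟩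
  simpa [Real.coe_toNNReal _ hc₀] using hlt (InfinitePlace.mk φ)

end Minkowski

section IdealImage

variable {K : Type*} [Field K] [NumberField K] {s t : ℕ}
  (ρ : Fin s → (K →+* ℝ)) (σ : Fin t → (K →+* ℂ))

theorem idealImage_nontrivial [Nonempty (PackIdx s t)] {I : Ideal (𝓞 K)} (hI : I ≠ ⊥) :
    (idealImage ρ σ I).Nontrivial := by
  obtain ⟨a, haI, ha0⟩ := Submodule.exists_mem_ne_zero_of_ne_bot hI
  refine ⟨_, ⟨a, haI, rfl⟩, _, ⟨0, I.zero_mem, rfl⟩, fun h => ha0 ?_⟩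
  exact RingOfIntegers.coe_injective (by simpa using tauEmb_injective ρ σ h)

theorem minDist_idealImage_le_of_forall_norm_le [Nonempty (PackIdx s t)] {I J : Ideal (𝓞 K)}
    (hI : I ≠ ⊥) {α : 𝓞 K} (hα : α ≠ 0) (hαI : ∀ x ∈ I, α * x ∈ J) {c : ℝ} (hc : 0 ≤ c)
    (hαc : ∀ φ : K →+* ℂ, ‖φ α‖ ≤ c) :
    minDist (idealImage ρ σ J) ≤ c * minDist (idealImage ρ σ I) := by
  refine minDist_le_mul_minDist_image hc (idealImage_nontrivial ρ σ hI)
    (v := fun x => tauEmb ρ σ (algebraMap (𝓞 K) K (α * x))) (fun x hx => ⟨_, hαI x hx, rfl⟩)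
    (fun x _ y _ h => mul_left_cancel₀ hα (RingOfIntegers.coe_injective
      (by simpa using tauEmb_injective ρ σ h))) fun x _ y _ => ?_
  simp only [dist_eq_norm, ← tauEmb_sub, ← map_sub, ← mul_sub, map_mul]
  exact norm_tauEmb_mul_le ρ σ hc (fun _ => hαc _) _

theorem minDist_idealImage_mul_le (hemb : IsEmbSystem ρ σ) {I J : Ideal (𝓞 K)} (hI : I ≠ ⊥)
    (hJ : J ≠ ⊥) :
    minDist (idealImage ρ σ (J * I)) ≤
      (Ideal.absNorm J * √|discr K|) ^ (Module.finrank ℚ K : ℝ)⁻¹ *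
        minDist (idealImage ρ σ I) := by
  have : Nonempty (PackIdx s t) := hemb.2.nonempty
  set B := (Ideal.absNorm J * √|discr K|) ^ (Module.finrank ℚ K : ℝ)⁻¹
  have hB : 0 ≤ B := by positivity
  have hscale : ∀ c > B, minDist (idealImage ρ σ (J * I)) ≤ c * minDist (idealImage ρ σ I) := by
    intro c hc
    have hcn : Ideal.absNorm J * √|discr K| < c ^ Module.finrank ℚ K := by
      calc _ = B ^ Module.finrank ℚ K :=
            (Real.rpow_inv_natCast_pow (by positivity) Module.finrank_pos.ne').symm
        _ < _ := pow_lt_pow_left₀ hc hB Module.finrank_pos.ne'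
    obtain ⟨α, hαJ, hα0, hαc⟩ := exists_ne_zero_mem_ideal_forall_norm_lt hJ (hB.trans hc.le) hcn
    exact minDist_idealImage_le_of_forall_norm_le ρ σ hI hα0
      (fun x hx => Ideal.mul_mem_mul hαJ hx) (hB.trans hc.le) fun φ => (hαc φ).le
  exact ge_of_tendsto (((continuous_mul_const _).tendsto B).mono_left nhdsWithin_le_nhds)
    (eventually_nhdsWithin_of_forall (s := Set.Ioi B) hscale)

end IdealImage

theorem statement13_general {K : Type*} [Field K] [NumberField K] {s t m : ℕ}
    (ρ : Fin s → (K →+* ℝ)) (σ : Fin t → (K →+* ℂ)) (hemb : IsEmbSystem ρ σ)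
    (hm : m = s + 2 * t)
    (p : Ideal (NumberField.RingOfIntegers K)) (hp0 : p ≠ ⊥)
    (q : ℕ) (hq : Ideal.absNorm p = q) (i ℓ : ℕ) (hiℓ : i ≤ ℓ) :
    (minDist (idealImage ρ σ (p ^ ℓ))) ^ 2 / (minDist (idealImage ρ σ (p ^ i))) ^ 2 ≤
      (q : ℝ) ^ (2 * ((ℓ : ℝ) - (i : ℝ)) / (m : ℝ)) *
        |(NumberField.discr K : ℝ)| ^ ((1 : ℝ) / (m : ℝ)) := by
  have hle := minDist_idealImage_mul_le ρ σ hemb (pow_ne_zero i hp0) (pow_ne_zero (ℓ - i) hp0)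
  rw [← pow_add, Nat.sub_add_cancel hiℓ, map_pow, hq, ← hemb.add_two_mul_eq_finrank, ← hm,
    Nat.cast_pow] at hle
  have hbound : (((q : ℝ) ^ (ℓ - i) * √|(discr K : ℝ)|) ^ (m : ℝ)⁻¹) ^ 2 =
      (q : ℝ) ^ (2 * ((ℓ : ℝ) - (i : ℝ)) / (m : ℝ)) * |(discr K : ℝ)| ^ ((1 : ℝ) / (m : ℝ)) := by
    rw [← Real.rpow_natCast _ 2, ← Real.rpow_mul (by positivity),
      Real.mul_rpow (by positivity) (by positivity), ← Real.rpow_natCast (q : ℝ) (ℓ - i),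
      ← Real.rpow_mul (by positivity), Real.sqrt_eq_rpow, ← Real.rpow_mul (abs_nonneg _),
      Nat.cast_sub hiℓ]
    congr 2 <;> ring
  rw [← hbound]
  refine div_le_of_le_mul₀ (by positivity) (by positivity) ?_
  rw [← mul_pow]
  exact pow_le_pow_left₀ (minDist_nonneg _) hle 2

/-- For `0 ≤ i ≤ ℓ`,
`d_E(L_ℓ)²/d_E(L_i)² ≤ q^{2(ℓ−i)/m}·|D_K|^{1/m}`. -/
theorem statement13 {K : Type*} [Field K] [NumberField K] {s t m : ℕ}
    (ρ : Fin s → (K →+* ℝ)) (σ : Fin t → (K →+* ℂ)) (hemb : IsEmbSystem ρ σ)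
    (hm : m = s + 2 * t)
    (p : Ideal (NumberField.RingOfIntegers K)) (hp : p.IsPrime) (hp0 : p ≠ ⊥)
    (q : ℕ) (hq : Ideal.absNorm p = q) (i ℓ : ℕ) (hiℓ : i ≤ ℓ) :
    (minDist (idealImage ρ σ (p ^ ℓ))) ^ 2 / (minDist (idealImage ρ σ (p ^ i))) ^ 2 ≤
      (q : ℝ) ^ (2 * ((ℓ : ℝ) - (i : ℝ)) / (m : ℝ)) *
        |(NumberField.discr K : ℝ)| ^ ((1 : ℝ) / (m : ℝ)) :=
  statement13_general ρ σ hemb hm p hp0 q hq i ℓ hiℓ
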